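/- Let u, φ ∈ 𝒮(ℝⁿ). Then the wave packet transform intertwines the Laplacian as follows: W_φ((1/2)Δu)(x,ξ) = W_{(1/2)Δφ} u(x,ξ) + i ξ · ∇_x W_φ u(x,ξ) − (|ξ|²/2) W_φ u(x,ξ). -/

import Mathlib

open SchwartzMap Complex MeasureTheory
open scoped BigOperators

/-- The Laplacian `Δ F = ∑ j ∂²F/∂y_j²` of a complex-valued function on `ℝⁿ`. -/
noncomputable def lap {n : ℕ} (F : EuclideanSpace ℝ (Fin n) → ℂ) :
    EuclideanSpace ℝ (Fin n) → ℂ := fun y =>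
  ∑ j : Fin n, fderiv ℝ (fun z => fderiv ℝ F z (EuclideanSpace.single j 1)) y
    (EuclideanSpace.single j 1)

/-- The wave packet transform `W_φ u (x,ξ) = ∫ conj(φ(y−x)) u(y) e^{−iy·ξ} dy`,
with window an arbitrary function. -/
noncomputable def WPT {n : ℕ} (φ u : EuclideanSpace ℝ (Fin n) → ℂ)
    (x ξ : EuclideanSpace ℝ (Fin n)) : ℂ :=
  ∫ y, starRingEnd ℂ (φ (y - x)) * u y *
    Complex.exp (-Complex.I * ((inner ℝ y ξ : ℝ) : ℂ))

/-!
Write `W_φ u (x, ξ) = ∫ k(y) u(y) dy` with kernel `k(y) = conj (φ (y - x)) e^{-i⟪y, ξ⟫}`.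
Differentiating `k` along a direction `v` gives the kernel of `∂_v φ` minus `i⟪v, ξ⟫ k`, so
integrating by parts twice in `y` turns `W_φ (∂_v² u)` into
`W_{∂_v² φ} u - 2i⟪v, ξ⟫ W_{∂_v φ} u - ⟪v, ξ⟫² W_φ u`. Differentiating under the integral sign,
the derivative of `W_φ u` in `x` along `v` is `-W_{∂_v φ} u`. Summing over the coordinate
directions gives the formula.
-/

open scoped LineDeriv InnerProductSpace

namespace SchwartzMap

variable {E : Type*} [NormedAddCommGroup E] [NormedSpace ℝ E]

noncomputable def conj (ψ : 𝓢(E, ℂ)) : 𝓢(E, ℂ) :=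
  postcompCLM (𝕜 := ℝ) conjCLE.toContinuousLinearMap ψ

@[simp]
theorem conj_apply (ψ : 𝓢(E, ℂ)) (y : E) : conj ψ y = starRingEnd ℂ (ψ y) := rfl

theorem lineDerivOp_conj (ψ : 𝓢(E, ℂ)) (v : E) : ∂_{v} (conj ψ) = conj (∂_{v} ψ) := by
  ext y
  simp only [lineDerivOp_apply_eq_fderiv, conj_apply]
  exact congr($(conjCLE.comp_fderiv (f := ψ) (x := y)) v)

end SchwartzMap

section WavePacket

variable {E : Type*} [NormedAddCommGroup E] [InnerProductSpace ℝ E]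

/-- The kernel `y ↦ conj (ψ (y - x)) e^{-i⟪y, ξ⟫}` of the wave packet transform, i.e. the complex
conjugate of the wave packet `ψ (· - x) e^{i⟪·, ξ⟫}`. -/
noncomputable def wavePacket (ψ : E → ℂ) (x ξ y : E) : ℂ :=
  starRingEnd ℂ (ψ (y - x)) * cexp (-I * ⟪y, ξ⟫_ℝ)

theorem norm_wavePacket (ψ : E → ℂ) (x ξ y : E) : ‖wavePacket ψ x ξ y‖ = ‖ψ (y - x)‖ := by
  rw [wavePacket, norm_mul, RCLike.norm_conj, Complex.norm_exp]
  simp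

theorem continuous_wavePacket {ψ : E → ℂ} (hψ : Continuous ψ) (x ξ : E) :
    Continuous (wavePacket ψ x ξ) := by
  unfold wavePacket
  fun_prop

theorem hasLineDerivAt_wavePacket (ψ : 𝓢(E, ℂ)) (x ξ v y : E) :
    HasLineDerivAt ℝ (wavePacket ψ x ξ)
      (wavePacket (∂_{v} ψ :) x ξ y - I * ⟪v, ξ⟫_ℝ * wavePacket ψ x ξ y) y v := by
  have hconj : HasFDerivAt (fun y => starRingEnd ℂ (ψ (y - x)))
      (conjCLE.toContinuousLinearMap ∘L fderiv ℝ ψ (y - x)) y :=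
    conjCLE.hasFDerivAt.comp y ((ψ.hasFDerivAt (y - x)).comp y ((hasFDerivAt_id y).sub_const x))
  have hchar : HasFDerivAt (fun y => cexp (-I * ⟪y, ξ⟫_ℝ))
      (cexp (-I * ⟪y, ξ⟫_ℝ) • (-I) • (ofRealCLM ∘L innerSL ℝ ξ)) y := by
    simpa [real_inner_comm] using ((ofRealCLM ∘L innerSL ℝ ξ).hasFDerivAt.const_mul (-I)).cexp
  convert (hconj.mul hchar).hasLineDerivAt v using 1
  · rfl
  · simp [wavePacket, lineDerivOp_apply_eq_fderiv, real_inner_comm]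
    ring

variable [MeasurableSpace E] [BorelSpace E] {μ : Measure E}

theorem integrable_wavePacket_mul (ψ : 𝓢(E, ℂ)) (x ξ : E) {f : E → ℂ} (hf : Integrable f μ) :
    Integrable (fun y => wavePacket ψ x ξ y * f y) μ := by
  refine hf.bdd_mul (c := SchwartzMap.seminorm ℝ 0 0 ψ)
    (continuous_wavePacket ψ.continuous x ξ).aestronglyMeasurable (.of_forall fun y => ?_)
  rw [norm_wavePacket]
  exact norm_le_seminorm ℝ ψ _

variable [FiniteDimensional ℝ E] [μ.IsAddHaarMeasure]

theorem integral_wavePacket_mul_lineDerivOp (ψ f : 𝓢(E, ℂ)) (x ξ v : E) :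
    ∫ y, wavePacket ψ x ξ y * ∂_{v} f y ∂μ =
      I * ⟪v, ξ⟫_ℝ * ∫ y, wavePacket ψ x ξ y * f y ∂μ
        - ∫ y, wavePacket (∂_{v} ψ :) x ξ y * f y ∂μ := by
  have hint (χ g : 𝓢(E, ℂ)) := integrable_wavePacket_mul χ x ξ (g.integrable (μ := μ))
  set c : ℂ := I * ⟪v, ξ⟫_ℝ
  have hsplit (y : E) : (wavePacket (∂_{v} ψ :) x ξ y - c * wavePacket ψ x ξ y) * f y =
      wavePacket (∂_{v} ψ :) x ξ y * f y - c * (wavePacket ψ x ξ y * f y) := by ring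
  have hint' : Integrable
      (fun y => (wavePacket (∂_{v} ψ :) x ξ y - c * wavePacket ψ x ξ y) * f y) μ := by
    simp only [hsplit]
    exact (hint _ f).sub ((hint ψ f).const_mul c)
  have hibp : ∫ y, wavePacket ψ x ξ y * ∂_{v} f y ∂μ =
      -∫ y, (wavePacket (∂_{v} ψ :) x ξ y - c * wavePacket ψ x ξ y) * f y ∂μ :=
    integral_bilinear_hasLineDerivAt_right_eq_neg_left_of_integrable
      (B := ContinuousLinearMap.mul ℝ ℂ) hint' (hint ψ (∂_{v} f)) (hint ψ f)
      (fun y _ => hasLineDerivAt_wavePacket ψ x ξ v y)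
      (fun y _ => (f.hasFDerivAt y).hasLineDerivAt v)
  simp only [hibp, hsplit]
  rw [integral_sub (hint _ f) ((hint ψ f).const_mul c), integral_const_mul]
  ring

end WavePacket

section Translate

variable {E : Type*} [NormedAddCommGroup E] [NormedSpace ℝ E] [MeasurableSpace E] [BorelSpace E]
  [SecondCountableTopology E] {μ : Measure E}

theorem hasFDerivAt_integral_comp_sub_mul (K : 𝓢(E, ℂ)) {g : E → ℂ} (hg : Integrable g μ)
    (x : E) :
    HasFDerivAt (fun x => ∫ y, K (y - x) * g y ∂μ) (∫ y, -(g y • fderiv ℝ K (y - x)) ∂μ) x := by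
  set C := SchwartzMap.seminorm ℝ 0 0 (fderivCLM ℝ E ℂ K)
  have hC (z : E) : ‖fderiv ℝ K z‖ ≤ C := norm_le_seminorm ℝ (fderivCLM ℝ E ℂ K) z
  have hK' : Continuous (fderiv ℝ K) := (fderivCLM ℝ E ℂ K).continuous
  have hderiv (x' y : E) :
      HasFDerivAt (fun x => K (y - x) * g y) (-(g y • fderiv ℝ K (y - x'))) x' := by
    refine (((K.hasFDerivAt (y - x')).comp x' ((hasFDerivAt_id x').const_sub y)).mul_const
      (g y)).congr_fderiv ?_
    ext v
    simp
  have hmeas {x' : E} : AEStronglyMeasurable (fun y => K (y - x')) μ :=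
    (K.continuous.comp (continuous_id.sub continuous_const)).aestronglyMeasurable
  refine hasFDerivAt_integral_of_dominated_of_fderiv_le (bound := fun y => ‖g y‖ * C)
    Filter.univ_mem (.of_forall fun x' => ?_) ?_ ?_ (.of_forall fun y x' _ => ?_)
    (hg.norm.mul_const C) (.of_forall fun y x' _ => hderiv x' y)
  · exact hmeas.mul hg.aestronglyMeasurable
  · exact hg.bdd_mul hmeas (.of_forall fun y => norm_le_seminorm ℝ K (y - x))
  · exact (hg.aestronglyMeasurable.smul
      (hK'.comp (continuous_id.sub continuous_const)).aestronglyMeasurable).neg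
  · rw [norm_neg, norm_smul]
    exact mul_le_mul_of_nonneg_left (hC _) (norm_nonneg _)

theorem fderiv_integral_comp_sub_mul_apply (K : 𝓢(E, ℂ)) {g : E → ℂ} (hg : Integrable g μ)
    (x v : E) :
    fderiv ℝ (fun x => ∫ y, K (y - x) * g y ∂μ) x v = -∫ y, ∂_{v} K (y - x) * g y ∂μ := by
  have hint : Integrable (fun y => g y • fderiv ℝ K (y - x)) μ :=
    hg.smul_bdd _
      ((fderivCLM ℝ E ℂ K).continuous.comp (continuous_sub_right x)).aestronglyMeasurable
      (.of_forall fun y => norm_le_seminorm ℝ (fderivCLM ℝ E ℂ K) (y - x))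
  rw [(hasFDerivAt_integral_comp_sub_mul K hg x).fderiv, integral_neg,
    neg_apply, ContinuousLinearMap.integral_apply hint]
  simp [lineDerivOp_apply_eq_fderiv, mul_comm]

end Translate

section WPT

variable {n : ℕ}

local notation "ℝⁿ" => EuclideanSpace ℝ (Fin n)

theorem WPT_eq_integral_wavePacket_mul (φ u : ℝⁿ → ℂ) (x ξ : ℝⁿ) :
    WPT φ u x ξ = ∫ y, wavePacket φ x ξ y * u y := by
  simp only [WPT, wavePacket, mul_right_comm]

theorem WPT_const_mul_left (c : ℂ) (φ u : ℝⁿ → ℂ) (x ξ : ℝⁿ) :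
    WPT (fun y => c * φ y) u x ξ = starRingEnd ℂ c * WPT φ u x ξ := by
  simp only [WPT, map_mul, mul_assoc, integral_const_mul]

theorem WPT_const_mul_right (c : ℂ) (φ u : ℝⁿ → ℂ) (x ξ : ℝⁿ) :
    WPT φ (fun y => c * u y) x ξ = c * WPT φ u x ξ := by
  simp only [WPT, mul_left_comm _ c, mul_assoc, integral_const_mul]

theorem lap_eq_sum_lineDerivOp (f : 𝓢(ℝⁿ, ℂ)) :
    lap f = fun y => ∑ j : Fin n, (∂_{EuclideanSpace.single j (1 : ℝ)}
      (∂_{EuclideanSpace.single j (1 : ℝ)} f) :) y := by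
  rfl

theorem WPT_sum_left {ι : Type*} (s : Finset ι) (φ : ι → 𝓢(ℝⁿ, ℂ)) {u : ℝⁿ → ℂ}
    (hu : Integrable u) (x ξ : ℝⁿ) :
    WPT (fun y => ∑ i ∈ s, φ i y) u x ξ = ∑ i ∈ s, WPT (φ i) u x ξ := by
  simp only [WPT_eq_integral_wavePacket_mul, wavePacket, map_sum, Finset.sum_mul]
  exact integral_finsetSum _ fun i _ => integrable_wavePacket_mul (φ i) x ξ hu

theorem WPT_sum_right {ι : Type*} (s : Finset ι) (φ : 𝓢(ℝⁿ, ℂ)) {u : ι → ℝⁿ → ℂ}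
    (hu : ∀ i ∈ s, Integrable (u i)) (x ξ : ℝⁿ) :
    WPT φ (fun y => ∑ i ∈ s, u i y) x ξ = ∑ i ∈ s, WPT φ (u i) x ξ := by
  simp only [WPT_eq_integral_wavePacket_mul, Finset.mul_sum]
  exact integral_finsetSum _ fun i hi => integrable_wavePacket_mul φ x ξ (hu i hi)

theorem WPT_lineDerivOp_right (φ f : 𝓢(ℝⁿ, ℂ)) (x ξ v : ℝⁿ) :
    WPT φ (∂_{v} f :) x ξ = I * ⟪v, ξ⟫_ℝ * WPT φ f x ξ - WPT (∂_{v} φ :) f x ξ := by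
  simp only [WPT_eq_integral_wavePacket_mul]
  exact integral_wavePacket_mul_lineDerivOp φ f x ξ v

theorem WPT_lineDerivOp_lineDerivOp_right (φ f : 𝓢(ℝⁿ, ℂ)) (x ξ v : ℝⁿ) :
    WPT φ (∂_{v} (∂_{v} f) :) x ξ = WPT (∂_{v} (∂_{v} φ) :) f x ξ
      - 2 * I * ⟪v, ξ⟫_ℝ * WPT (∂_{v} φ :) f x ξ - ⟪v, ξ⟫_ℝ ^ 2 * WPT φ f x ξ := by
  rw [WPT_lineDerivOp_right, WPT_lineDerivOp_right, WPT_lineDerivOp_right]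
  linear_combination (⟪v, ξ⟫_ℝ ^ 2 * WPT φ f x ξ : ℂ) * I_sq

theorem fderiv_WPT (φ u : 𝓢(ℝⁿ, ℂ)) (x ξ v : ℝⁿ) :
    fderiv ℝ (fun x => WPT φ u x ξ) x v = -WPT (∂_{v} φ :) u x ξ := by
  have hWPT (ψ : 𝓢(ℝⁿ, ℂ)) (x : ℝⁿ) :
      WPT ψ u x ξ = ∫ y, ψ.conj (y - x) * (cexp (-I * ⟪y, ξ⟫_ℝ) * u y) := by
    simp only [WPT, conj_apply, mul_assoc, mul_comm (u _)]
  have hint : Integrable (fun y => cexp (-I * ⟪y, ξ⟫_ℝ) * u y) :=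
    u.integrable.bdd_mul (c := 1) (by fun_prop) (.of_forall fun y => by simp [Complex.norm_exp])
  simp only [hWPT]
  rw [fderiv_integral_comp_sub_mul_apply _ hint, lineDerivOp_conj, ← hWPT]

end WPT

theorem stmt12 (n : ℕ) (u φ : SchwartzMap (EuclideanSpace ℝ (Fin n)) ℂ) :
    ∀ x ξ : EuclideanSpace ℝ (Fin n),
      WPT (⇑φ) (fun y => (1 / 2 : ℂ) * lap (⇑u) y) x ξ
        =
      WPT (fun y => (1 / 2 : ℂ) * lap (⇑φ) y) (⇑u) x ξ
        + Complex.I * ∑ j : Fin n, ((ξ j : ℝ) : ℂ) *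
            fderiv ℝ (fun x' => WPT (⇑φ) (⇑u) x' ξ) x (EuclideanSpace.single j 1)
        - ((‖ξ‖ ^ 2 : ℝ) : ℂ) / 2 * WPT (⇑φ) (⇑u) x ξ := by
  intro x ξ
  rw [lap_eq_sum_lineDerivOp, lap_eq_sum_lineDerivOp, WPT_const_mul_right,
    WPT_sum_right _ _ fun j _ => SchwartzMap.integrable _, WPT_const_mul_left,
    WPT_sum_left _ _ u.integrable]
  simp only [WPT_lineDerivOp_lineDerivOp_right, fderiv_WPT, EuclideanSpace.inner_single_left,
    map_one, one_mul, map_div₀, map_ofNat, EuclideanSpace.norm_sq_eq, Real.norm_eq_abs, sq_abs]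
  push_cast
  rw [Finset.mul_sum, Finset.mul_sum, Finset.mul_sum, Finset.sum_div, Finset.sum_mul,
    ← Finset.sum_add_distrib, ← Finset.sum_sub_distrib]
  refine Finset.sum_congr rfl fun j _ => ?_
  ring
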